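/- Let H be a complex Hilbert space and let B, M₀, M₁ be bounded self-adjoint operators on H such that M₀² + M₁² = 1 (the identity operator). Let λ ≥ 0 satisfy ‖MᵢB − BMᵢ‖ ≤ λ for i = 0, 1, and let m ≥ 0 be such that ‖B(Mᵢu)‖² ≥ m‖Mᵢu‖² for every u ∈ H and i = 0, 1. Then ‖Bu‖ ≥ (√(m + 2λ²) − 2λ)·‖u‖ for every u ∈ H. -/

import Mathlib

/-!
For self-adjoint `Mᵢ` with `M₀² + M₁² = 1` one has `‖M₀v‖² + ‖M₁v‖² = ‖v‖²`. Commuting `B` past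
`Mᵢ` costs at most `λ‖u‖`, so summing the two local lower bounds, and bounding the cross terms with
`‖Mᵢ(Bu)‖ ≤ ‖Bu‖`, gives `(m + 2λ²)‖u‖² ≤ (‖Bu‖ + 2λ‖u‖)²`.
-/

open scoped InnerProductSpace

namespace ContinuousLinearMap

theorem norm_apply_apply_le_swap_add_commutator {𝕜 E : Type*} [NontriviallyNormedField 𝕜]
    [SeminormedAddCommGroup E] [NormedSpace 𝕜 E] (A M : E →L[𝕜] E) (u : E) :
    ‖A (M u)‖ ≤ ‖M (A u)‖ + ‖M * A - A * M‖ * ‖u‖ :=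
  calc ‖A (M u)‖ = ‖M (A u) - (M * A - A * M) u‖ := by simp
    _ ≤ ‖M (A u)‖ + ‖M * A - A * M‖ * ‖u‖ := norm_sub_le_of_le le_rfl (le_opNorm _ u)

end ContinuousLinearMap

namespace IsSelfAdjoint

variable {𝕜 E : Type*} [RCLike 𝕜] [NormedAddCommGroup E] [InnerProductSpace 𝕜 E] [CompleteSpace E]
  {M₀ M₁ : E →L[𝕜] E}

theorem norm_sq_add_norm_sq_of_sq_add_sq_eq_one (hM₀ : IsSelfAdjoint M₀) (hM₁ : IsSelfAdjoint M₁)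
    (hpart : M₀ ^ 2 + M₁ ^ 2 = 1) (v : E) : ‖M₀ v‖ ^ 2 + ‖M₁ v‖ ^ 2 = ‖v‖ ^ 2 := by
  have hv : M₀ (M₀ v) + M₁ (M₁ v) = v := by
    simpa [pow_two] using congrArg (fun T : E →L[𝕜] E => T v) hpart
  rw [ContinuousLinearMap.apply_norm_sq_eq_inner_adjoint_left,
    ContinuousLinearMap.apply_norm_sq_eq_inner_adjoint_left, hM₀.adjoint_eq, hM₁.adjoint_eq,
    ← map_add, ← inner_add_left]
  simp only [ContinuousLinearMap.comp_apply, hv, inner_self_eq_norm_sq]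

theorem norm_apply_le_of_sq_add_sq_eq_one (hM₀ : IsSelfAdjoint M₀) (hM₁ : IsSelfAdjoint M₁)
    (hpart : M₀ ^ 2 + M₁ ^ 2 = 1) (v : E) : ‖M₀ v‖ ≤ ‖v‖ := by
  refine (pow_le_pow_iff_left₀ (norm_nonneg _) (norm_nonneg _) two_ne_zero).mp ?_
  rw [← hM₀.norm_sq_add_norm_sq_of_sq_add_sq_eq_one hM₁ hpart v]
  exact le_add_of_nonneg_right (sq_nonneg _)

end IsSelfAdjoint

theorem Real.sqrt_mul_le_of_mul_sq_le_sq {a c s : ℝ} (hc : 0 ≤ c) (hs : 0 ≤ s)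
    (h : a * c ^ 2 ≤ s ^ 2) : √a * c ≤ s :=
  calc √a * c = √(a * c ^ 2) := by rw [Real.sqrt_mul' a (sq_nonneg c), Real.sqrt_sq hc]
    _ ≤ √(s ^ 2) := Real.sqrt_le_sqrt h
    _ = s := Real.sqrt_sq hs

theorem gluing_lower_bound_general
    {H : Type*} [NormedAddCommGroup H] [InnerProductSpace ℂ H] [CompleteSpace H]
    (B M₀ M₁ : H →L[ℂ] H)
    (hM₀ : IsSelfAdjoint M₀) (hM₁ : IsSelfAdjoint M₁)
    (hpart : M₀ ^ 2 + M₁ ^ 2 = 1)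
    (lam : ℝ)
    (hcomm₀ : ‖M₀ * B - B * M₀‖ ≤ lam) (hcomm₁ : ‖M₁ * B - B * M₁‖ ≤ lam)
    (m : ℝ)
    (hlow₀ : ∀ u : H, ‖B (M₀ u)‖ ^ 2 ≥ m * ‖M₀ u‖ ^ 2)
    (hlow₁ : ∀ u : H, ‖B (M₁ u)‖ ^ 2 ≥ m * ‖M₁ u‖ ^ 2) :
    ∀ u : H, ‖B u‖ ≥ (Real.sqrt (m + 2 * lam ^ 2) - 2 * lam) * ‖u‖ := by
  intro u
  have hlam : 0 ≤ lam := (norm_nonneg _).trans hcomm₀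
  have local_bound (M : H →L[ℂ] H) (hM : ‖M * B - B * M‖ ≤ lam) :
      ‖B (M u)‖ ^ 2 ≤ (‖M (B u)‖ + lam * ‖u‖) ^ 2 := by
    gcongr
    exact (B.norm_apply_apply_le_swap_add_commutator M u).trans (by gcongr)
  have hu := hM₀.norm_sq_add_norm_sq_of_sq_add_sq_eq_one hM₁ hpart u
  have hBu := hM₀.norm_sq_add_norm_sq_of_sq_add_sq_eq_one hM₁ hpart (B u)
  have hsum : ‖M₀ (B u)‖ + ‖M₁ (B u)‖ ≤ 2 * ‖B u‖ := two_mul ‖B u‖ ▸ add_le_add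
    (hM₀.norm_apply_le_of_sq_add_sq_eq_one hM₁ hpart (B u))
    (hM₁.norm_apply_le_of_sq_add_sq_eq_one hM₀ (add_comm (M₀ ^ 2) _ ▸ hpart) (B u))
  have key : (m + 2 * lam ^ 2) * ‖u‖ ^ 2 ≤ (‖B u‖ + 2 * lam * ‖u‖) ^ 2 :=
    calc (m + 2 * lam ^ 2) * ‖u‖ ^ 2
        = m * ‖M₀ u‖ ^ 2 + m * ‖M₁ u‖ ^ 2 + 2 * lam ^ 2 * ‖u‖ ^ 2 := by rw [← hu]; ring
      _ ≤ (‖M₀ (B u)‖ + lam * ‖u‖) ^ 2 + (‖M₁ (B u)‖ + lam * ‖u‖) ^ 2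
            + 2 * lam ^ 2 * ‖u‖ ^ 2 := by
          gcongr ?_ + ?_ + _
          exacts [le_trans (hlow₀ u) (local_bound M₀ hcomm₀),
            le_trans (hlow₁ u) (local_bound M₁ hcomm₁)]
      _ = ‖M₀ (B u)‖ ^ 2 + ‖M₁ (B u)‖ ^ 2 + 2 * (lam * ‖u‖) * (‖M₀ (B u)‖ + ‖M₁ (B u)‖)
            + 4 * lam ^ 2 * ‖u‖ ^ 2 := by ring
      _ ≤ ‖B u‖ ^ 2 + 2 * (lam * ‖u‖) * (2 * ‖B u‖) + 4 * lam ^ 2 * ‖u‖ ^ 2 := by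
          rw [hBu]; gcongr
      _ = (‖B u‖ + 2 * lam * ‖u‖) ^ 2 := by ring
  rw [ge_iff_le, sub_mul, sub_le_iff_le_add]
  exact Real.sqrt_mul_le_of_mul_sq_le_sq (norm_nonneg u) (by positivity) key

/-- Gluing estimate: if `M₀² + M₁² = 1` is a partition of unity of self-adjoint
operators almost commuting with a self-adjoint operator `B`
(`‖[Mᵢ, B]‖ ≤ λ`), and `B` satisfies the lower bound `‖B(Mᵢu)‖² ≥ m‖Mᵢu‖²`
on the range of each `Mᵢ`, then globally `‖Bu‖ ≥ (√(m + 2λ²) − 2λ)‖u‖`. -/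
theorem gluing_lower_bound
    {H : Type*} [NormedAddCommGroup H] [InnerProductSpace ℂ H] [CompleteSpace H]
    (B M₀ M₁ : H →L[ℂ] H)
    (hB : IsSelfAdjoint B) (hM₀ : IsSelfAdjoint M₀) (hM₁ : IsSelfAdjoint M₁)
    (hpart : M₀ ^ 2 + M₁ ^ 2 = 1)
    (lam : ℝ) (hlam : 0 ≤ lam)
    (hcomm₀ : ‖M₀ * B - B * M₀‖ ≤ lam) (hcomm₁ : ‖M₁ * B - B * M₁‖ ≤ lam)
    (m : ℝ) (hm : 0 ≤ m)
    (hlow₀ : ∀ u : H, ‖B (M₀ u)‖ ^ 2 ≥ m * ‖M₀ u‖ ^ 2)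
    (hlow₁ : ∀ u : H, ‖B (M₁ u)‖ ^ 2 ≥ m * ‖M₁ u‖ ^ 2) :
    ∀ u : H, ‖B u‖ ≥ (Real.sqrt (m + 2 * lam ^ 2) - 2 * lam) * ‖u‖ :=
  gluing_lower_bound_general B M₀ M₁ hM₀ hM₁ hpart lam hcomm₀ hcomm₁ m hlow₀ hlow₁
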